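/- Let f : ℕ → ℕ be an injective function with f(n) ≥ n for all n. For s ∈ [0,1] define T_s : (ℕ → ℝ) → (ℕ → ℝ) by (T_s v)(i) = (1−s)·v(i) + s·w(i), where w(i) = v(f⁻¹(i)) if i lies in the range of f, and w(i) = 0 otherwise (f⁻¹(i) denoting the unique preimage). Then T_s is injective for every s ∈ [0,1]. -/
import Mathlib


open Classical in
/-- The linear isotopy `T_s` built from an injective `f : ℕ → ℕ` with `f n ≥ n`
is injective on the space of real sequences for every `s ∈ [0,1]`. Here the
term `if h : ∃ j, f j = i then v h.choose else 0` is `v (f⁻¹ i)` when `i` is in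
the range of `f`, and `0` otherwise. -/
theorem isotopy_injective (f : ℕ → ℕ) (hinj : Function.Injective f)
    (hge : ∀ n, n ≤ f n) (s : ℝ) (hs0 : 0 ≤ s) (hs1 : s ≤ 1) :
    Function.Injective (fun v : ℕ → ℝ => fun i : ℕ =>
      (1 - s) * v i + s * (if h : ∃ j, f j = i then v h.choose else 0)) := by
  intro v u heq
  have h : ∀ i, (1 - s) * v i + s * (if h : ∃ j, f j = i then v h.choose else 0)
      = (1 - s) * u i + s * (if h : ∃ j, f j = i then u h.choose else 0) :=
    fun i => congrFun heq i
  funext i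
  rcases eq_or_lt_of_le hs1 with hs1' | hs1'
  · -- s = 1
    have hfi := h (f i)
    have he : ∃ j, f j = f i := ⟨i, rfl⟩
    have hc : he.choose = i := hinj he.choose_spec
    rw [dif_pos he, dif_pos he, hc] at hfi
    subst hs1'
    simpa using hfi
  · -- s < 1
    induction i using Nat.strong_induction_on with
    | _ i ih =>
      have hi := h i
      by_cases he : ∃ j, f j = i
      · rw [dif_pos he, dif_pos he] at hi
        have hle : he.choose ≤ i := le_of_le_of_eq (hge he.choose) he.choose_spec
        rcases lt_or_eq_of_le hle with hlt | heqc
        · rw [ih he.choose hlt] at hi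
          have h2 : (1 - s) * v i = (1 - s) * u i := by linarith
          exact mul_left_cancel₀ (by linarith) h2
        · rw [heqc] at hi
          linear_combination hi
      · rw [dif_neg he, dif_neg he] at hi
        have h2 : (1 - s) * v i = (1 - s) * u i := by linarith
        exact mul_left_cancel₀ (by linarith) h2
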